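/- Let F ⊂ S^{2n-1} be a nonempty set and (X,λ) a diagonal aligned vector field on ℂ^n. If the family {λ_1,…,λ_n} is linearly independent over ℤ, then any point w = (w_1,…,w_n) ∈ F̄ with w_k ≠ 0 for each k generates a nonsparse leaf of S^X_0(F). Conversely, if {λ_1,…,λ_n} is linearly dependent over ℤ, then there exists a set G ⊂ S^{2n-1} such that the suspension S^X_0(G) is sparse (has no nonsparse leaf) and contains the point (e^{-λ_1}/√n, …, e^{-λ_n}/√n). -/

import Mathlib

open Filter Metric Set
open scoped ENNReal Classical Topology

noncomputable section

namespace Forelli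

/-- `ℂⁿ` with the Euclidean norm. -/
abbrev E (n : ℕ) : Type := EuclideanSpace ℂ (Fin n)

/-- The open right half-plane `ℍ`. -/
def HH : Set ℂ := {t : ℂ | 0 < t.re}

/-- The complex flow `Φ^X(z,t)` of the diagonal vector field with eigenvalues `lam`. -/
def flow {n : ℕ} (lam : Fin n → ℝ) (z : E n) (t : ℂ) : E n :=
  WithLp.toLp 2 (fun j => z j * Complex.exp (-((lam j : ℂ) * t)))

/-- `S` is `λ`-balanced. -/
def LamBalanced {n : ℕ} (lam : Fin n → ℝ) (S : Set (E n)) : Prop :=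
  ∀ z ∈ S, ∀ t ∈ HH, flow lam z t ∈ S

/-- `S` is `λ`-circular. -/
def LamCircular {n : ℕ} (lam : Fin n → ℝ) (S : Set (E n)) : Prop :=
  ∀ z ∈ S, ∀ t : ℂ, t.re = 0 → flow lam z t ∈ S

/-- The suspension `S^X_0(F)`. -/
def susp {n : ℕ} (lam : Fin n → ℝ) (F : Set (E n)) : Set (E n) :=
  {w | ∃ z ∈ F, ∃ t ∈ HH, w = flow lam z t}

/-- The unit sphere `S^{2n-1}` in `ℂⁿ`. -/
def sphereE (n : ℕ) : Set (E n) := Metric.sphere (0 : E n) 1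

/-- The open unit ball `Bⁿ` in `ℂⁿ`. -/
def ballE (n : ℕ) : Set (E n) := Metric.ball (0 : E n) 1

/-- Subharmonicity of an `EReal`-valued function on `ℂ`, characterized via comparison with
real parts of holomorphic functions on closed discs. -/
def Subharmonic (u : ℂ → EReal) : Prop :=
  UpperSemicontinuous u ∧
  ∀ (c : ℂ) (r : ℝ), 0 < r →
    ∀ g : ℂ → ℂ, DifferentiableOn ℂ g (Metric.closedBall c r) →
      (∀ w ∈ Metric.sphere c r, u w ≤ ((g w).re : EReal)) →
      ∀ w ∈ Metric.closedBall c r, u w ≤ ((g w).re : EReal)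

/-- Plurisubharmonicity on `ℂⁿ`: upper semicontinuous, not identically `-∞`, and
subharmonic along every complex line. -/
def Plurisubharmonic {n : ℕ} (u : E n → EReal) : Prop :=
  UpperSemicontinuous u ∧ (∃ z, u z ≠ ⊥) ∧
  ∀ a b : E n, Subharmonic (fun t : ℂ => u (a + t • b))

/-- Membership in the class `H_λ`. -/
def MemH {n : ℕ} (lam : Fin n → ℝ) (u : E n → ℝ) : Prop :=
  Plurisubharmonic (fun z => ((u z : ℝ) : EReal)) ∧
  (∀ z, 0 ≤ u z) ∧
  (∃ z w, u z ≠ u w) ∧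
  ∀ (z : E n) (t : ℂ), u (flow lam z t) = Real.exp (-t.re) * u z

/-- `q` is (the evaluation of) a polynomial in `z` and `z̄`. -/
def IsPolyZZbar {n : ℕ} (q : E n → ℂ) : Prop :=
  ∃ P : MvPolynomial (Fin n ⊕ Fin n) ℂ,
    ∀ z : E n,
      q z = MvPolynomial.eval (Sum.elim (fun j => z j) fun j => (starRingEnd ℂ) (z j)) P

/-- `q` is (the evaluation of) a holomorphic polynomial. -/
def IsPolyZ {n : ℕ} (q : E n → ℂ) : Prop :=
  ∃ P : MvPolynomial (Fin n) ℂ, ∀ z : E n, q z = MvPolynomial.eval (fun j => z j) P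

/-- Quasi-homogeneous of type `λ` with bidegree `(d₁, d₂)`; i.e. membership in `𝓗_λ`
with the given bidegree. -/
def QuasiHomog {n : ℕ} (lam : Fin n → ℝ) (d1 d2 : ℝ) (q : E n → ℂ) : Prop :=
  IsPolyZZbar q ∧
  ∀ t ∈ HH, ∀ z : E n,
    q (flow lam z t) =
      Complex.exp (-((d1 : ℂ) * t)) * Complex.exp (-((d2 : ℂ) * (starRingEnd ℂ) t)) * q z

/-- `S^X_0(F)` has a nonsparse leaf generated by `z ∈ F̄`. -/
def NonsparseLeaf {n : ℕ} (lam : Fin n → ℝ) (F : Set (E n)) (z : E n) : Prop :=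
  z ∈ closure F ∧
  ∀ U : Set (E n), IsOpen U → z ∈ U →
    ∀ (d1 d2 : ℝ) (q : E n → ℂ), QuasiHomog lam d1 d2 q → d2 ≠ 0 →
      (∀ w ∈ closure F ∩ U, q w = 0) → ∀ w, q w = 0

/-- The `j`-th standard basis vector. -/
def coordVec {n : ℕ} (j : Fin n) : E n := EuclideanSpace.single j 1

/-- The Wirtinger derivative `∂/∂z_j`. -/
def wZ {n : ℕ} (j : Fin n) (f : E n → ℂ) : E n → ℂ := fun z =>
  (1 / 2 : ℂ) *
    (fderiv ℝ f z (coordVec j) - Complex.I * fderiv ℝ f z (Complex.I • coordVec j))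

/-- The Wirtinger derivative `∂/∂z̄_j`. -/
def wZbar {n : ℕ} (j : Fin n) (f : E n → ℂ) : E n → ℂ := fun z =>
  (1 / 2 : ℂ) *
    (fderiv ℝ f z (coordVec j) + Complex.I * fderiv ℝ f z (Complex.I • coordVec j))

/-- Iterated application of coordinatewise differential operators along a multi-index. -/
def iterD {n : ℕ} (D : (j : Fin n) → (E n → ℂ) → E n → ℂ) (k : Fin n → ℕ)
    (f : E n → ℂ) : E n → ℂ :=
  (List.finRange n).foldr (fun j g => (D j)^[k j] g) f

/-- The Taylor coefficient `a_{km} = (k! m!)⁻¹ ∂^{|k|+|m|} f / ∂z^k ∂z̄^m (0)`. -/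
def taylorCoeff {n : ℕ} (f : E n → ℂ) (k m : Fin n → ℕ) : ℂ :=
  (((∏ j, Nat.factorial (k j)) * ∏ j, Nat.factorial (m j) : ℕ) : ℂ)⁻¹ *
    iterD wZ k (iterD wZbar m f) 0

/-- `f ∈ C^∞(0)`. -/
def SmoothAtZero {n : ℕ} (f : E n → ℂ) : Prop :=
  ∀ k : ℕ, ∃ V ∈ 𝓝 (0 : E n), ContDiffOn ℝ (k : ℕ∞) f V

/-- `f` is holomorphic along the suspension `S^X_0(F)`. -/
def HoloAlong {n : ℕ} (lam : Fin n → ℝ) (F : Set (E n)) (f : E n → ℂ) : Prop :=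
  ∀ z ∈ F, DifferentiableOn ℂ (fun t : ℂ => f (flow lam z t)) HH

/-- `S^X_0(F)` is a formal Forelli suspension. -/
def FormalForelli {n : ℕ} (lam : Fin n → ℝ) (F : Set (E n)) : Prop :=
  ∀ f : E n → ℂ, SmoothAtZero f → HoloAlong lam F f →
    ∀ k m : Fin n → ℕ, m ≠ 0 → taylorCoeff f k m = 0

/-- The extremal function `Ψ_{S,λ}` for bounded `S`. -/
def PsiBdd {n : ℕ} (lam : Fin n → ℝ) (S : Set (E n)) (z : E n) : ℝ≥0∞ :=
  ⨆ u ∈ {u : E n → ℝ | MemH lam u ∧ ∀ w ∈ S, u w ≤ 1}, ENNReal.ofReal (u z)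

/-- The extremal function `Ψ_{S,λ}`. -/
def Psi {n : ℕ} (lam : Fin n → ℝ) (S : Set (E n)) (z : E n) : ℝ≥0∞ :=
  if Bornology.IsBounded S then PsiBdd lam S z
  else ⨅ G ∈ {G : Set (E n) | G ⊆ S ∧ Bornology.IsBounded G}, PsiBdd lam G z

/-- Upper semicontinuous regularization of an `ℝ≥0∞`-valued function. -/
def uscReg {n : ℕ} (v : E n → ℝ≥0∞) (z : E n) : ℝ≥0∞ := Filter.limsup v (𝓝 z)

/-- The `λ`-projective capacity `ρ_λ`. -/
def capacity {n : ℕ} (lam : Fin n → ℝ) (S : Set (E n)) : ℝ≥0∞ :=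
  ⨅ u ∈ {u : E n → ℝ |
      MemH lam u ∧ (⨆ z ∈ sphereE n, ENNReal.ofReal (u z)) = 1},
    ⨆ z ∈ S, ENNReal.ofReal (u z)

/-- `S` is `λ`-pluripolar. -/
def LamPluripolar {n : ℕ} (lam : Fin n → ℝ) (S : Set (E n)) : Prop :=
  ∃ u : E n → ℝ, MemH lam u ∧ ∀ z ∈ S, u z = 0

/-- `S` is pluripolar. -/
def Pluripolar {n : ℕ} (S : Set (E n)) : Prop :=
  ∃ u : E n → EReal, Plurisubharmonic u ∧ (∃ z w, u z ≠ u w) ∧ ∀ z ∈ S, u z = ⊥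

/-- The Lelong class `𝓛_n`. -/
def MemL {n : ℕ} (u : E n → EReal) : Prop :=
  Plurisubharmonic u ∧ ∃ C : ℝ, ∀ z, u z ≤ ((C + Real.log (1 + ‖z‖) : ℝ) : EReal)

/-- The pluricomplex Green function `V_S` for bounded `S`. -/
def VBdd {n : ℕ} (S : Set (E n)) (z : E n) : EReal :=
  sSup {y : EReal | ∃ u : E n → EReal, MemL u ∧ (∀ w ∈ S, u w ≤ (0 : EReal)) ∧ y = u z}

/-- The pluricomplex Green function `V_S`. -/
def greenV {n : ℕ} (S : Set (E n)) (z : E n) : EReal :=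
  if Bornology.IsBounded S then VBdd S z
  else ⨅ G ∈ {G : Set (E n) | G ⊆ S ∧ Bornology.IsBounded G}, VBdd G z

/-- Upper semicontinuous regularization of an `EReal`-valued function. -/
def uscRegE {n : ℕ} (v : E n → EReal) (z : E n) : EReal := Filter.limsup v (𝓝 z)

/-- The exponential `EReal → ℝ≥0∞`. -/
def expE (x : EReal) : ℝ≥0∞ :=
  if x = ⊥ then 0 else if x = ⊤ then ⊤ else ENNReal.ofReal (Real.exp x.toReal)

/-- `Φ_S = exp V_S`. -/
def PhiGreen {n : ℕ} (S : Set (E n)) (z : E n) : ℝ≥0∞ := expE (greenV S z)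

/-- `S` is `L`-regular at `a`. -/
def LRegularAt {n : ℕ} (S : Set (E n)) (a : E n) : Prop :=
  a ∈ closure S ∧ uscRegE (greenV S) a = 0

/-- `S` is locally `L`-regular at `a`. -/
def LocallyLRegularAt {n : ℕ} (S : Set (E n)) (a : E n) : Prop :=
  ∀ r : ℝ, 0 < r → LRegularAt (S ∩ Metric.ball a r) a

/-- A branch of the complex logarithm off the branch cut `{Re ≤ 0}`. -/
def log1 : ℂ → ℂ := Complex.log

/-- A branch of the complex logarithm off the branch cut `{Re ≥ 0}`. -/
def log2 : ℂ → ℂ := fun z => Complex.log (-z) + Real.pi * Complex.I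

def cut1 : Set ℂ := {z : ℂ | z.re ≤ 0}

def cut2 : Set ℂ := {z : ℂ | 0 ≤ z.re}

/-- The `λ`-direction set `F'_{λ,i}` determined by a branch `Li` of log with cut `Ci`. -/
def dirSet {n : ℕ} (lam : Fin (n + 1) → ℝ) (F : Set (E (n + 1))) (Li : ℂ → ℂ)
    (Ci : Set ℂ) : Set (E n) :=
  {w | ∃ z ∈ F, z 0 ≠ 0 ∧ z 0 ∉ Ci ∧
    ∀ j : Fin n, w j = z j.succ / Complex.exp ((lam j.succ : ℂ) * Li (z 0))}

/-- The `λ`-direction set `F'_λ = F'_{λ,1} ∪ F'_{λ,2}`. -/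
def dirUnion {n : ℕ} (lam : Fin (n + 1) → ℝ) (F : Set (E (n + 1))) : Set (E n) :=
  dirSet lam F log1 cut1 ∪ dirSet lam F log2 cut2

/-- The point `(z₂/z₁^{λ₂}, …, z_n/z₁^{λ_n})`. -/
def dirPoint {n : ℕ} (lam : Fin (n + 1) → ℝ) (Li : ℂ → ℂ) (z : E (n + 1)) : E n :=
  WithLp.toLp 2 (fun j => z j.succ / Complex.exp ((lam j.succ : ℂ) * Li (z 0)))

/-- `S^X_0(F)` has a regular leaf generated by `z ∈ F̄`. -/
def RegularLeaf {n : ℕ} (lam : Fin (n + 1) → ℝ) (F : Set (E (n + 1)))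
    (z : E (n + 1)) : Prop :=
  z ∈ closure F ∧ z 0 ≠ 0 ∧
  ∃ p : (ℂ → ℂ) × Set ℂ, (p = (log1, cut1) ∨ p = (log2, cut2)) ∧ z 0 ∉ p.2 ∧
    LocallyLRegularAt (dirUnion lam F) (dirPoint lam p.1 z)

/-- `Ω` is a domain of holomorphy: some holomorphic function on `Ω` does not extend
holomorphically across any boundary point. -/
def IsDomainOfHolomorphy {n : ℕ} (Ω : Set (E n)) : Prop :=
  IsOpen Ω ∧ IsPreconnected Ω ∧ Ω.Nonempty ∧
  ∃ f : E n → ℂ, DifferentiableOn ℂ f Ω ∧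
    ∀ (U : Set (E n)) (g : E n → ℂ),
      IsOpen U → IsPreconnected U → (U ∩ Ω).Nonempty → ¬U ⊆ Ω →
        DifferentiableOn ℂ g U →
          ¬∃ W : Set (E n), IsOpen W ∧ W.Nonempty ∧ W ⊆ U ∩ Ω ∧ Set.EqOn f g W

/-!
If `λ` is `ℤ`-independent, distinct exponents `(α, β)` of monomials `z^α z̄^β` have distinct
weights `(⟨λ, α⟩, ⟨λ, β⟩)`. For a quasi-homogeneous `q` with `q w = 0`, the function
`s ↦ q (Φ(w, (1 + i) s))` vanishes for `s ≥ 0` and is a combination of the exponentials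
`exp (ν s)`, one for each monomial of `q`, with distinct `ν` (along this ray `t` and `t̄` are
independent over `ℝ`, so `ν` remembers both weights). Dedekind's independence of characters of
`(ℝ≥0, +)` kills every coefficient `c_{αβ} w^α w̄^β`, and as no coordinate of `w` vanishes, `q = 0`.

If `λ` is `ℤ`-dependent, there are `k ≠ m` in `ℕⁿ` with `⟨λ, k⟩ = ⟨λ, m⟩`. Then
`z^k z̄^m - z^m z̄^k` is quasi-homogeneous of bidegree `(⟨λ, k⟩, ⟨λ, k⟩)`, vanishes at every point
with real coordinates and is not identically zero, so the suspension of the single real point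
`(1/√n, …, 1/√n)` is sparse.
-/

open scoped NNReal ComplexConjugate Complex

theorem linearIndependent_int_iff_injective_sum_nsmul {ι M : Type*} [Fintype ι]
    [AddCommGroup M] {v : ι → M} :
    LinearIndependent ℤ v ↔ Function.Injective fun a : ι → ℕ => ∑ i, a i • v i := by
  rw [Fintype.linearIndependent_iff]
  constructor
  · intro hv a b hab
    funext i
    have := hv (fun i => (a i : ℤ) - b i) (by
      simp only [sub_smul, natCast_zsmul, Finset.sum_sub_distrib]
      exact sub_eq_zero.2 hab) i
    omega
  · intro hinj g hg i
    have := congrFun (@hinj (fun i => (g i).toNat) (fun i => (-g i).toNat) (by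
      rw [← sub_eq_zero, ← Finset.sum_sub_distrib, ← hg]
      refine Finset.sum_congr rfl fun i _ => ?_
      rw [← natCast_zsmul, ← natCast_zsmul, ← sub_smul, Int.toNat_sub_toNat_neg])) i
    omega

theorem sum_nsmul_pos {ι : Type*} [Fintype ι] {v : ι → ℝ} (hv : ∀ i, 0 < v i)
    {a : ι → ℕ} (ha : a ≠ 0) : 0 < ∑ i, a i • v i := by
  obtain ⟨i, hi⟩ := Function.ne_iff.1 ha
  exact Finset.sum_pos' (fun j _ => nsmul_nonneg (hv j).le _)
    ⟨i, Finset.mem_univ _, nsmul_pos (hv i) hi⟩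

def expChar (ν : ℂ) : Multiplicative ℝ≥0 →* ℂ where
  toFun s := cexp (ν * (s.toAdd : ℝ))
  map_one' := by simp
  map_mul' a b := by simp [mul_add, Complex.exp_add]

theorem expChar_apply (ν : ℂ) (s : Multiplicative ℝ≥0) : expChar ν s = cexp (ν * (s.toAdd : ℝ)) :=
  rfl

theorem expChar_injective : Function.Injective expChar := by
  intro ν ν' h
  have hderiv (μ : ℂ) : HasDerivWithinAt (fun x : ℝ => cexp (μ * x)) μ (Ici 0) 0 := by
    simpa using (((hasDerivAt_id (0 : ℝ)).ofReal_comp.const_mul μ).cexp).hasDerivWithinAt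
  refine (uniqueDiffOn_Ici 0 0 self_mem_Ici).eq_deriv _ (hderiv ν) ((hderiv ν').congr ?_ ?_)
  · intro x hx
    exact DFunLike.congr_fun h (Multiplicative.ofAdd (⟨x, hx⟩ : ℝ≥0))
  · simp

theorem eq_zero_of_sum_mul_cexp_eq_zero {ι : Type*} {ν : ι → ℂ} (hν : Function.Injective ν)
    {s : Finset ι} {a : ι → ℂ}
    (h : ∀ x : ℝ, 0 ≤ x → ∑ i ∈ s, a i * cexp (ν i * x) = 0) : ∀ i ∈ s, a i = 0 := by
  refine linearIndependent_iff'.1 ((linearIndependent_monoidHom _ ℂ).comp _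
    (expChar_injective.comp hν)) s a ?_
  funext x
  simpa [expChar_apply] using h x.toAdd x.toAdd.2

section Flow

variable {N : ℕ}

theorem flow_apply (lam : Fin N → ℝ) (z : E N) (t : ℂ) (j : Fin N) :
    flow lam z t j = z j * cexp (-(lam j * t)) :=
  rfl

theorem flow_zero (lam : Fin N → ℝ) (z : E N) : flow lam z 0 = z := by
  ext j
  simp [flow_apply]

def zzbar (z : E N) : Fin N ⊕ Fin N → ℂ :=
  Sum.elim (fun j => z j) fun j => conj (z j)

def zzbarMonomial (d : Fin N ⊕ Fin N → ℕ) (z : E N) : ℂ :=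
  ∏ i, zzbar z i ^ d i

def flowExponent (lam : Fin N → ℝ) (t : ℂ) : Fin N ⊕ Fin N → ℂ :=
  Sum.elim (fun j => -(lam j * t)) fun j => -(lam j * conj t)

theorem zzbar_flow (lam : Fin N → ℝ) (z : E N) (t : ℂ) (i : Fin N ⊕ Fin N) :
    zzbar (flow lam z t) i = zzbar z i * cexp (flowExponent lam t i) := by
  rcases i with j | j
  · rfl
  · simp [zzbar, flowExponent, flow_apply, ← Complex.exp_conj]

theorem flowExponent_mul_ofReal (lam : Fin N → ℝ) (t : ℂ) (s : ℝ) (i : Fin N ⊕ Fin N) :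
    flowExponent lam (t * s) i = flowExponent lam t i * s := by
  rcases i with j | j <;> simp [flowExponent, mul_assoc]

theorem zzbarMonomial_flow (lam : Fin N → ℝ) (d : Fin N ⊕ Fin N → ℕ) (z : E N) (t : ℂ) :
    zzbarMonomial d (flow lam z t) =
      zzbarMonomial d z * cexp (∑ i, d i • flowExponent lam t i) := by
  simp only [zzbarMonomial, zzbar_flow, mul_pow, Finset.prod_mul_distrib, Complex.exp_sum,
    ← Complex.exp_nsmul]

theorem zzbarMonomial_ne_zero {z : E N} (hz : ∀ j, z j ≠ 0) (d : Fin N ⊕ Fin N → ℕ) :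
    zzbarMonomial d z ≠ 0 := by
  refine Finset.prod_ne_zero_iff.2 fun i _ => pow_ne_zero _ ?_
  rcases i with j | j
  exacts [hz j, (map_ne_zero _).2 (hz j)]

theorem isPolyZZbar_zzbarMonomial (d : Fin N ⊕ Fin N → ℕ) :
    IsPolyZZbar (zzbarMonomial d) := by
  refine ⟨MvPolynomial.monomial (Finsupp.equivFunOnFinite.symm d) 1, fun z => ?_⟩
  rw [MvPolynomial.eval_monomial, Finsupp.prod_fintype _ _ fun _ => pow_zero _, one_mul]
  rfl

theorem IsPolyZZbar.sub {p q : E N → ℂ} (hp : IsPolyZZbar p) (hq : IsPolyZZbar q) :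
    IsPolyZZbar (p - q) := by
  obtain ⟨P, hP⟩ := hp
  obtain ⟨Q, hQ⟩ := hq
  exact ⟨P - Q, fun z => by simp [hP, hQ]⟩

end Flow

section LinearlyIndependent

variable {N : ℕ} {lam : Fin N → ℝ}

theorem linearIndependent_flowExponent (hli : LinearIndependent ℤ lam) :
    LinearIndependent ℤ (flowExponent lam (1 + Complex.I)) := by
  rw [Fintype.linearIndependent_iff] at hli ⊢
  intro g hg
  set A := ∑ j, g (.inl j) • lam j
  set B := ∑ j, g (.inr j) • lam j
  have hAB : -((1 + Complex.I) * A) - (1 - Complex.I) * B = 0 := by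
    rw [← hg, Fintype.sum_sum_type]
    simp only [A, B, flowExponent, Sum.elim_inl, Sum.elim_inr, zsmul_eq_mul, smul_neg,
      Finset.sum_neg_distrib, Complex.ofReal_sum, Complex.ofReal_mul, Complex.ofReal_intCast,
      Finset.mul_sum, map_add, map_one, Complex.conj_I]
    ring_nf
  obtain ⟨hre, him⟩ := Complex.ext_iff.1 hAB
  simp only [Complex.sub_re, Complex.sub_im, Complex.neg_re, Complex.neg_im, Complex.mul_re,
    Complex.mul_im, Complex.add_re, Complex.add_im, Complex.one_re, Complex.one_im, Complex.I_re,
    Complex.I_im, Complex.ofReal_re, Complex.ofReal_im, Complex.zero_re, Complex.zero_im] at hre him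
  rintro (j | j)
  · exact hli (fun j => g (.inl j)) (by linarith) j
  · exact hli (fun j => g (.inr j)) (by linarith) j

theorem QuasiHomog.eq_zero_of_apply_eq_zero (hli : LinearIndependent ℤ lam) {d1 d2 : ℝ}
    {q : E N → ℂ} (hq : QuasiHomog lam d1 d2 q) {w : E N} (hw : ∀ j, w j ≠ 0) (hqw : q w = 0)
    (z : E N) : q z = 0 := by
  obtain ⟨⟨P, hP⟩, hflow⟩ := hq
  replace hP : ∀ z, q z = ∑ d ∈ P.support, P.coeff d * zzbarMonomial d z := fun z =>
    (hP z).trans (MvPolynomial.eval_eq' _ _)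
  set ν : (Fin N ⊕ Fin N →₀ ℕ) → ℂ := fun d => ∑ i, d i • flowExponent lam (1 + Complex.I) i
  have hν : Function.Injective ν :=
    (linearIndependent_int_iff_injective_sum_nsmul.1 (linearIndependent_flowExponent hli)).comp
      DFunLike.coe_injective
  have hray (s : ℝ) (hs : 0 ≤ s) :
      ∑ d ∈ P.support, P.coeff d * zzbarMonomial d w * cexp (ν d * s) = 0 := by
    have : q (flow lam w ((1 + Complex.I) * s)) = 0 := by
      rcases hs.eq_or_lt with rfl | hs
      · simpa [flow_zero] using hqw
      · rw [hflow _ (by simp [HH, hs]) w, hqw, mul_zero]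
    rw [← this, hP]
    refine Finset.sum_congr rfl fun d _ => ?_
    simp only [zzbarMonomial_flow, flowExponent_mul_ofReal, smul_mul_assoc, ν,
      Finset.sum_mul, mul_assoc]
  have hsupp : P.support = ∅ := Finset.eq_empty_of_forall_notMem fun d hd =>
    MvPolynomial.mem_support_iff.1 hd <| (mul_eq_zero.1 <|
      eq_zero_of_sum_mul_cexp_eq_zero hν hray d hd).resolve_right (zzbarMonomial_ne_zero hw d)
  simp [hP, hsupp]

end LinearlyIndependent

section LinearlyDependent

variable {N : ℕ} {lam : Fin N → ℝ}

theorem sum_elim_nsmul_flowExponent (k m : Fin N → ℕ) (t : ℂ) :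
    ∑ i, Sum.elim k m i • flowExponent lam t i =
      -((∑ j, k j • lam j : ℝ) * t) - (∑ j, m j • lam j : ℝ) * conj t := by
  simp [Fintype.sum_sum_type, flowExponent, Finset.sum_mul, Finset.sum_neg_distrib, mul_assoc,
    sub_eq_add_neg]

theorem quasiHomog_sub_swap {k m : Fin N → ℕ} (h : ∑ j, k j • lam j = ∑ j, m j • lam j) :
    QuasiHomog lam (∑ j, k j • lam j) (∑ j, k j • lam j)
      (zzbarMonomial (Sum.elim k m) - zzbarMonomial (Sum.elim m k)) := by
  refine ⟨(isPolyZZbar_zzbarMonomial _).sub (isPolyZZbar_zzbarMonomial _), fun t _ z => ?_⟩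
  simp only [Pi.sub_apply, zzbarMonomial_flow, sum_elim_nsmul_flowExponent, h,
    sub_eq_add_neg _ (_ * conj t), Complex.exp_add]
  ring

theorem zzbarMonomial_swap_of_conj_eq {z : E N} (hz : ∀ j, conj (z j) = z j)
    (k m : Fin N → ℕ) : zzbarMonomial (Sum.elim k m) z = zzbarMonomial (Sum.elim m k) z := by
  simp [zzbarMonomial, Fintype.prod_sum_type, zzbar, hz, mul_comm]

-- The flow with weights `(k - m) / ‖k - m‖²` at time `iπ/2` turns the two monomials, both `1` at
-- `(1, …, 1)`, into `-i` and `i`.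
theorem exists_zzbarMonomial_ne_swap {k m : Fin N → ℕ} (hkm : k ≠ m) :
    ∃ z : E N, zzbarMonomial (Sum.elim k m) z ≠ zzbarMonomial (Sum.elim m k) z := by
  set S : ℝ := ∑ j, ((k j : ℝ) - m j) ^ 2
  have hS : 0 < S := by
    obtain ⟨j, hj⟩ := Function.ne_iff.1 hkm
    refine Finset.sum_pos' (fun j _ => sq_nonneg _) ⟨j, Finset.mem_univ _, ?_⟩
    exact sq_pos_of_ne_zero (sub_ne_zero.2 (by exact_mod_cast hj))
  set c : Fin N → ℝ := fun j => ((k j : ℝ) - m j) / S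
  have hc : ∑ j, k j • c j - ∑ j, m j • c j = 1 := by
    rw [← Finset.sum_sub_distrib, ← div_self hS.ne', Finset.sum_div]
    refine Finset.sum_congr rfl fun j _ => ?_
    simp only [c, nsmul_eq_mul]
    ring
  set t : ℂ := Real.pi / 2 * Complex.I
  have hconj : conj t = -t := by
    simp [t, Complex.conj_ofReal, Complex.conj_I, map_ofNat]
  have hone (d : Fin N ⊕ Fin N → ℕ) : zzbarMonomial d (WithLp.toLp 2 1) = 1 := by
    simp [zzbarMonomial, zzbar]
  refine ⟨flow c (WithLp.toLp 2 1) t, ?_⟩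
  set M := ∑ j, m j • c j
  simp only [zzbarMonomial_flow, sum_elim_nsmul_flowExponent, hone, one_mul, hconj,
    eq_add_of_sub_eq hc, Complex.ofReal_add, Complex.ofReal_one]
  rw [show -(((1 : ℂ) + M) * t) - M * -t = -t by ring,
    show -((M : ℂ) * t) - (1 + M) * -t = t by ring, Complex.exp_neg,
    Complex.exp_pi_div_two_mul_I, Complex.inv_I]
  norm_num [Complex.ext_iff]

end LinearlyDependent

theorem not_exists_nonsparseLeaf {N : ℕ} {lam : Fin N → ℝ} {G : Set (E N)} {d1 d2 : ℝ}
    {q : E N → ℂ} (hq : QuasiHomog lam d1 d2 q) (hd2 : d2 ≠ 0)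
    (hG : ∀ w ∈ closure G, q w = 0) {z : E N} (hz : q z ≠ 0) :
    ¬∃ w, NonsparseLeaf lam G w := by
  rintro ⟨w, -, hleaf⟩
  exact hz (hleaf univ isOpen_univ (mem_univ w) d1 d2 q hq hd2 (fun x hx => hG x hx.1) z)

theorem const_inv_sqrt_mem_sphereE (n : ℕ) :
    (WithLp.toLp 2 fun _ => (((√(n + 1 : ℝ))⁻¹ : ℝ) : ℂ) : E (n + 1)) ∈ sphereE (n + 1) := by
  rw [sphereE, mem_sphere_zero_iff_norm, EuclideanSpace.norm_eq]
  simpa [Complex.norm_real] using mul_inv_cancel₀ (by positivity : √(n + 1 : ℝ) ≠ 0)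

theorem statement3_general {n : ℕ} (lam : Fin (n + 1) → ℝ) (hpos : ∀ k, 0 < lam k) :
    (LinearIndependent ℤ lam →
      ∀ F : Set (E (n + 1)), F.Nonempty → F ⊆ sphereE (n + 1) →
        ∀ w ∈ closure F, (∀ k, w k ≠ 0) → NonsparseLeaf lam F w) ∧
    (¬LinearIndependent ℤ lam →
      ∃ G : Set (E (n + 1)), G ⊆ sphereE (n + 1) ∧
        (¬∃ z, NonsparseLeaf lam G z) ∧
        (show E (n + 1) from
            WithLp.toLp 2 (fun k => ((Real.exp (-lam k) / Real.sqrt (n + 1) : ℝ) : ℂ))) ∈ susp lam G) := by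
  refine ⟨fun hli F _ _ w hw hw0 => ⟨hw, fun U _ hwU d1 d2 q hq _ hvan =>
    hq.eq_zero_of_apply_eq_zero hli hw0 (hvan w ⟨hw, hwU⟩)⟩, fun hdep => ?_⟩
  obtain ⟨k, m, hD, hkm⟩ : ∃ k m : Fin (n + 1) → ℕ,
      ∑ j, k j • lam j = ∑ j, m j • lam j ∧ k ≠ m := by
    simpa [Function.Injective, linearIndependent_int_iff_injective_sum_nsmul] using hdep
  have hD0 : ∑ j, k j • lam j ≠ 0 := by
    rcases eq_or_ne k 0 with rfl | hk
    · exact hD ▸ (sum_nsmul_pos hpos hkm.symm).ne'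
    · exact (sum_nsmul_pos hpos hk).ne'
  obtain ⟨z, hz⟩ := exists_zzbarMonomial_ne_swap hkm
  set z0 : E (n + 1) := WithLp.toLp 2 fun _ => (((√(n + 1 : ℝ))⁻¹ : ℝ) : ℂ)
  refine ⟨{z0}, singleton_subset_iff.2 (const_inv_sqrt_mem_sphereE n),
    not_exists_nonsparseLeaf (quasiHomog_sub_swap hD) hD0 ?_ (sub_ne_zero.2 hz),
    z0, rfl, 1, by simp [HH], ?_⟩
  · intro w hw
    rw [closure_singleton, mem_singleton_iff] at hw
    subst hw
    exact sub_eq_zero.2 (zzbarMonomial_swap_of_conj_eq (fun _ => Complex.conj_ofReal _) k m)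
  · ext j
    simp [flow_apply, z0, div_eq_inv_mul]

/-- if `λ` is linearly independent over `ℤ` then every `w ∈ F̄` with all
coordinates nonzero generates a nonsparse leaf; if `λ` is linearly dependent over `ℤ` then
there is a sparse suspension `S^X_0(G)` containing `(e^{-λ_1}/√n, …, e^{-λ_n}/√n)`. -/
theorem statement3 {n : ℕ} (lam : Fin (n + 1) → ℝ)
    (hlam0 : lam 0 = 1) (hpos : ∀ k, 0 < lam k) :
    (LinearIndependent ℤ lam →
      ∀ F : Set (E (n + 1)), F.Nonempty → F ⊆ sphereE (n + 1) →
        ∀ w ∈ closure F, (∀ k, w k ≠ 0) → NonsparseLeaf lam F w) ∧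
    (¬LinearIndependent ℤ lam →
      ∃ G : Set (E (n + 1)), G ⊆ sphereE (n + 1) ∧
        (¬∃ z, NonsparseLeaf lam G z) ∧
        (show E (n + 1) from
            WithLp.toLp 2 (fun k => ((Real.exp (-lam k) / Real.sqrt (n + 1) : ℝ) : ℂ))) ∈ susp lam G) :=
  statement3_general lam hpos

end Forelli
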